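/- Let f be a k-homogeneous Boolean function on 𝔽₂^n and let f̄ be its complement (replace each monomial m by the monomial in the complementary variable set [n]∖Var(m)). For every k-dimensional linear subspace U of 𝔽₂^n: ∑_{x∈U} f(x) ≠ 0 if and only if ∑_{x∈U^⊥} f̄(x) ≠ 0. -/

import Mathlib

/-- Sum of a function over a (finite) set of points. -/
noncomputable def setSum {α β : Type*} [Fintype α] [AddCommMonoid β]
    (S : Set α) (F : α → β) : β :=
  ∑ x ∈ (Set.toFinite S).toFinset, F x

/-!
Over `𝔽₂`, for a subspace `W` with `dim W = |S|`, the sum `∑_{x ∈ W} ∏_{j ∈ S} x j` is the parity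
of the fibre over `(1, …, 1)` of the restriction `W → 𝔽₂^S`. That fibre is a single point when the
restriction is injective (hence bijective), and otherwise it is empty or a coset of a nonzero
kernel, of even size. The restriction to `S` is injective on `U` iff `U` meets the coordinate
subspace `{x | x|_S = 0}` trivially; as the dimensions are complementary this says that the two
span the space, i.e. that their orthogonals `Uᗮ` and `{x | x|_Sᶜ = 0}` meet trivially. So each
monomial `x^S` sums over `U` to the same value as `x^Sᶜ` over `Uᗮ`, and summing over the
monomials of `f` gives `∑_U f = ∑_{Uᗮ} f̄`.
-/

open Module Function

namespace LinearMap.BilinForm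

variable {K V : Type*} [Field K] [AddCommGroup V] [Module K V] {B : LinearMap.BilinForm K V}

theorem orthogonal_sup (B : LinearMap.BilinForm K V) (U W : Submodule K V) :
    B.orthogonal (U ⊔ W) = B.orthogonal U ⊓ B.orthogonal W := by
  ext v
  simp only [Submodule.mem_inf, mem_orthogonal_iff]
  refine ⟨fun h => ⟨fun u hu => h u (Submodule.mem_sup_left hu),
    fun w hw => h w (Submodule.mem_sup_right hw)⟩, fun ⟨hU, hW⟩ x hx => ?_⟩
  obtain ⟨u, hu, w, hw, rfl⟩ := Submodule.mem_sup.mp hx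
  rw [map_add, LinearMap.add_apply, hU u hu, hW w hw, add_zero]

variable [FiniteDimensional K V]

theorem disjoint_orthogonal_of_disjoint (hB : B.Nondegenerate) {U W : Submodule K V}
    (hdim : finrank K U + finrank K W = finrank K V) (h : Disjoint U W) :
    Disjoint (B.orthogonal U) (B.orthogonal W) := by
  rw [disjoint_iff, ← orthogonal_sup, Submodule.eq_top_of_disjoint U W hdim.ge h,
    orthogonal_top_eq_bot hB]

theorem disjoint_orthogonal_iff (hB : B.Nondegenerate) (hB₀ : B.IsRefl) {U W : Submodule K V}
    (hdim : finrank K U + finrank K W = finrank K V) :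
    Disjoint (B.orthogonal U) (B.orthogonal W) ↔ Disjoint U W := by
  refine ⟨fun h => ?_, disjoint_orthogonal_of_disjoint hB hdim⟩
  rw [← orthogonal_orthogonal hB hB₀ U, ← orthogonal_orthogonal hB hB₀ W]
  refine disjoint_orthogonal_of_disjoint hB ?_ h
  rw [finrank_orthogonal hB, finrank_orthogonal hB]
  omega

end LinearMap.BilinForm

theorem LinearMap.natCast_card_fiber_eq_ite {K M N : Type*} [Field K] [Fintype K]
    [AddCommGroup M] [Module K M] [FiniteDimensional K M]
    [AddCommGroup N] [Module K N] [FiniteDimensional K N]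
    (φ : M →ₗ[K] N) [Decidable (Injective φ)] (hdim : finrank K M = finrank K N) (w : N) :
    (Nat.card {x // φ x = w} : K) = if Injective φ then 1 else 0 := by
  split_ifs with hinj
  · obtain ⟨x, hx⟩ := (LinearMap.injective_iff_surjective_of_finrank_eq_finrank hdim).mp hinj w
    have : Unique {x // φ x = w} :=
      ⟨⟨⟨x, hx⟩⟩, fun y => Subtype.ext (hinj (y.2.trans hx.symm))⟩
    rw [Nat.card_unique, Nat.cast_one]
  rcases isEmpty_or_nonempty {x // φ x = w} with hempty | ⟨x₀, hx₀⟩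
  · rw [Nat.card_of_isEmpty, Nat.cast_zero]
  have hfiber : {x // φ x = w} ≃ LinearMap.ker φ :=
    (Equiv.subRight x₀).subtypeEquiv fun x => by simp [sub_eq_zero, hx₀]
  have hker : finrank K (LinearMap.ker φ) ≠ 0 := by
    rwa [Ne, Submodule.finrank_eq_zero, LinearMap.ker_eq_bot]
  rw [Nat.card_congr hfiber, Module.natCard_eq_pow_finrank (K := K), Nat.cast_pow,
    Nat.card_eq_fintype_card, FiniteField.cast_card_eq_zero, zero_pow hker]

section DotProduct

variable {K ι : Type*} [Field K]

theorem dotProductBilin_isRefl [Fintype ι] :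
    LinearMap.BilinForm.IsRefl (dotProductBilin K K : LinearMap.BilinForm K (ι → K)) :=
  fun x y h => by simpa [dotProduct_comm] using h

theorem dotProductBilin_nondegenerate [Fintype ι] [DecidableEq ι] :
    (dotProductBilin K K : LinearMap.BilinForm K (ι → K)).Nondegenerate :=
  LinearMap.BilinForm.Nondegenerate.ofSeparatingLeft fun x hx =>
    funext fun i => by simpa using hx (Pi.single i 1)

variable (K) in
def Finset.restrictₗ (S : Finset ι) : (ι → K) →ₗ[K] (S → K) :=
  LinearMap.funLeft K K (↑)

theorem Finset.restrictₗ_surjective (S : Finset ι) : Surjective (S.restrictₗ K) :=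
  LinearMap.funLeft_surjective_of_injective _ _ _ Subtype.val_injective

theorem Finset.mem_ker_restrictₗ {S : Finset ι} {x : ι → K} :
    x ∈ LinearMap.ker (S.restrictₗ K) ↔ ∀ i ∈ S, x i = 0 := by
  simp [funext_iff, Finset.restrictₗ, LinearMap.funLeft_apply]

variable [Fintype ι]

theorem Finset.finrank_ker_restrictₗ (S : Finset ι) :
    finrank K (LinearMap.ker (S.restrictₗ K)) = Fintype.card ι - S.card := by
  have := LinearMap.finrank_range_add_finrank_ker (S.restrictₗ K)
  rw [LinearMap.range_eq_top.mpr S.restrictₗ_surjective, finrank_top,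
    finrank_fintype_fun_eq_card, finrank_fintype_fun_eq_card, Fintype.card_coe] at this
  omega

variable [DecidableEq ι]

theorem orthogonal_ker_restrictₗ (S : Finset ι) :
    LinearMap.BilinForm.orthogonal (dotProductBilin K K) (LinearMap.ker (S.restrictₗ K)) =
      LinearMap.ker (Sᶜ.restrictₗ K) := by
  ext v
  simp only [LinearMap.BilinForm.mem_orthogonal_iff, Finset.mem_ker_restrictₗ,
    dotProductBilin_apply_apply]
  refine ⟨fun h i hi => ?_, fun h x hx => Finset.sum_eq_zero fun i _ => ?_⟩
  · simpa using h (Pi.single i 1) fun j hj => Pi.single_eq_of_ne (by rintro rfl; simp_all) _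
  · by_cases hi : i ∈ S
    · simp [hx i hi]
    · simp [h i (Finset.mem_compl.mpr hi)]

theorem injective_restrictₗ_domRestrict_orthogonal_iff {U : Submodule K (ι → K)}
    {S : Finset ι} (hU : finrank K U = S.card) :
    Injective ((Sᶜ.restrictₗ K).domRestrict
        (LinearMap.BilinForm.orthogonal (dotProductBilin K K) U)) ↔
      Injective ((S.restrictₗ K).domRestrict U) := by
  rw [LinearMap.injective_domRestrict_iff, LinearMap.injective_domRestrict_iff,
    ← orthogonal_ker_restrictₗ S,
    LinearMap.BilinForm.disjoint_orthogonal_iff dotProductBilin_nondegenerate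
      dotProductBilin_isRefl]
  rw [S.finrank_ker_restrictₗ, hU, finrank_fintype_fun_eq_card]
  have := S.card_le_univ
  omega

end DotProduct

theorem prod_zmod_two_eq_ite {ι : Type*} (x : ι → ZMod 2) (S : Finset ι) :
    ∏ i ∈ S, x i = if S.restrictₗ (ZMod 2) x = 1 then 1 else 0 := by
  have hbool : ∀ a : ZMod 2, a = if a = 1 then 1 else 0 := by decide
  rw [Finset.prod_congr rfl fun i _ => hbool (x i), Finset.prod_boole]
  simp [funext_iff, Finset.restrictₗ, LinearMap.funLeft_apply]

section ZModTwo

variable {ι : Type*} [Fintype ι] [DecidableEq ι]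

open scoped Classical

theorem sum_prod_eq_ite_injective (W : Submodule (ZMod 2) (ι → ZMod 2)) {S : Finset ι}
    (hW : finrank (ZMod 2) W = S.card) :
    ∑ x : W, ∏ i ∈ S, (x : ι → ZMod 2) i =
      if Injective ((S.restrictₗ (ZMod 2)).domRestrict W) then 1 else 0 := by
  simp_rw [prod_zmod_two_eq_ite]
  rw [Finset.sum_boole, ← Fintype.card_subtype, ← Nat.card_eq_fintype_card]
  refine LinearMap.natCast_card_fiber_eq_ite ((S.restrictₗ (ZMod 2)).domRestrict W) ?_ 1
  rw [hW, finrank_fintype_fun_eq_card, Fintype.card_coe]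

theorem sum_prod_eq_sum_orthogonal_prod_compl (U : Submodule (ZMod 2) (ι → ZMod 2))
    {S : Finset ι} (hU : finrank (ZMod 2) U = S.card) :
    ∑ x : U, ∏ i ∈ S, (x : ι → ZMod 2) i =
      ∑ x : LinearMap.BilinForm.orthogonal (dotProductBilin (ZMod 2) (ZMod 2)) U,
        ∏ i ∈ Sᶜ, (x : ι → ZMod 2) i := by
  have hperp : finrank (ZMod 2)
      (LinearMap.BilinForm.orthogonal (dotProductBilin (ZMod 2) (ZMod 2)) U) = Sᶜ.card := by
    rw [LinearMap.BilinForm.finrank_orthogonal dotProductBilin_nondegenerate, hU,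
      finrank_fintype_fun_eq_card, Finset.card_compl]
  simp only [sum_prod_eq_ite_injective U hU, sum_prod_eq_ite_injective _ hperp,
    injective_restrictₗ_domRestrict_orthogonal_iff hU]

end ZModTwo

theorem setSum_eq_sum_subtype {α β : Type*} [Fintype α] [AddCommMonoid β] (S : Set α)
    [Fintype S] (F : α → β) : setSum S F = ∑ x : S, F x :=
  Finset.sum_subtype _ (fun _ => Set.Finite.mem_toFinset _) F

theorem stmt_16 (n k t : ℕ) (I : Fin t → Finset (Fin n))
    (hhom : ∀ i, (I i).card = k)
    (f fbar : (Fin n → ZMod 2) → ZMod 2)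
    (hf : ∀ x, f x = ∑ i, ∏ j ∈ I i, x j)
    (hfbar : ∀ x, fbar x = ∑ i, ∏ j ∈ (I i)ᶜ, x j)
    (U : Submodule (ZMod 2) (Fin n → ZMod 2)) (hU : Module.finrank (ZMod 2) U = k) :
    setSum (U : Set (Fin n → ZMod 2)) f ≠ 0 ↔
      setSum {v : Fin n → ZMod 2 | ∀ u ∈ U, ∑ i, v i * u i = 0} fbar ≠ 0 := by
  classical
  set Uperp := LinearMap.BilinForm.orthogonal (dotProductBilin (ZMod 2) (ZMod 2)) U
  have hperp : {v : Fin n → ZMod 2 | ∀ u ∈ U, ∑ i, v i * u i = 0} = Uperp := by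
    ext v
    simp [Uperp, dotProduct, mul_comm]
  suffices setSum (U : Set (Fin n → ZMod 2)) f = setSum (Uperp : Set (Fin n → ZMod 2)) fbar by
    rw [hperp, this]
  rw [setSum_eq_sum_subtype, setSum_eq_sum_subtype]
  calc ∑ x : U, f x = ∑ i, ∑ x : U, ∏ j ∈ I i, (x : Fin n → ZMod 2) j := by
        simp only [hf]; exact Finset.sum_comm
    _ = ∑ i, ∑ x : Uperp, ∏ j ∈ (I i)ᶜ, (x : Fin n → ZMod 2) j :=
        Finset.sum_congr rfl fun i _ =>
          sum_prod_eq_sum_orthogonal_prod_compl U (hU.trans (hhom i).symm)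
    _ = ∑ x : Uperp, fbar x := by
        simp only [hfbar]; exact Finset.sum_comm
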